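/- arXiv:2603.18347 — 2 statements merged into one kernel-verified Lean document; each statement's English description precedes it below -/
import Mathlib

section
/- Let T be a spanning tree of a connected graph G with positive vertex populations and ideal population I = pop(G)/k. If T has exactly k−1 valid cut edges (edges whose removal splits T into two subtrees whose populations are both integer multiples of I), then removing all k−1 valid cut edges from T yields exactly k connected components, each with population exactly I. -/
open scoped Classical

/-- Total population of a vertex subset. -/
noncomputable def popSet {V : Type*} [Fintype V] (pop : V → ℕ) (s : Set V) : ℕ :=
  ∑ v ∈ Finset.univ, if v ∈ s then pop v else 0

/-- `e` is a valid cut edge of the tree `T`: it is an edge of `T`, and after deleting it,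
every connected component has population a positive integer multiple of `I`. -/
def ValidCut {V : Type*} [Fintype V] (T : SimpleGraph V) (pop : V → ℕ) (I : ℕ)
    (e : Sym2 V) : Prop :=
  e ∈ T.edgeSet ∧
    ∀ c : (T.deleteEdges {e}).ConnectedComponent,
      ∃ m : ℕ, 1 ≤ m ∧ popSet pop c.supp = m * I
/-!
Every component of `T` minus its valid cut edges has population divisible by `I`. Delete the cut
edges one at a time: when `e` is deleted, the component of an endpoint `x` of `e` is what remains
of the side of `x` in `T - e`, a multiple of `I`, after taking away the components lying on that
side that touch neither endpoint of `e`; those existed before `e` was deleted. Deleting `k - 1`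
edges from a tree leaves at least `k` components, and components with positive populations
divisible by `I` summing to `k * I` must be exactly `k`, each of population `I`.
-/

open SimpleGraph Finset

lemma card_eq_and_forall_eq_of_sum_eq_mul {ι : Type*} [Fintype ι] {f : ι → ℕ} {k I : ℕ}
    (hI : 0 < I) (hf : ∀ i, I ≤ f i) (hsum : ∑ i, f i = k * I) (hk : k ≤ Nat.card ι) :
    Nat.card ι = k ∧ ∀ i, f i = I := by
  rw [Nat.card_eq_fintype_card] at hk ⊢
  have hle : Fintype.card ι * I ≤ k * I := by
    calc Fintype.card ι * I = ∑ _i : ι, I := by simp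
      _ ≤ ∑ i, f i := sum_le_sum fun i _ => hf i
      _ = k * I := hsum
  have hcard : Fintype.card ι = k := le_antisymm (Nat.le_of_mul_le_mul_right hle hI) hk
  refine ⟨hcard, fun i => ?_⟩
  have hconst : ∑ _i : ι, I = ∑ i, f i := by simp [hsum, hcard]
  exact ((sum_eq_sum_iff_of_le fun i _ => hf i).mp hconst i (mem_univ i)).symm

section popSet

variable {V : Type*} [Fintype V] (pop : V → ℕ)

lemma popSet_eq_sum_filter (s : Set V) : popSet pop s = ∑ v ∈ univ.filter (· ∈ s), pop v :=
  (sum_filter _ _).symm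

lemma popSet_pos {s : Set V} (hs : s.Nonempty) (hpos : ∀ v, 0 < pop v) : 0 < popSet pop s := by
  obtain ⟨v, hv⟩ := hs
  rw [popSet_eq_sum_filter]
  exact sum_pos' (fun _ _ => Nat.zero_le _) ⟨v, by simpa using hv, hpos v⟩

lemma popSet_biUnion_supp {H : SimpleGraph V} (C : Finset H.ConnectedComponent) :
    popSet pop (⋃ c ∈ C, c.supp) = ∑ c ∈ C, popSet pop c.supp := by
  simp only [popSet_eq_sum_filter]
  rw [← sum_fiberwise_of_maps_to (g := H.connectedComponentMk) (t := C)]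
  · refine sum_congr rfl fun c hc => sum_congr ?_ fun _ _ => rfl
    ext v
    simp only [mem_filter, mem_univ, true_and, Set.mem_iUnion, ConnectedComponent.mem_supp_iff]
    exact ⟨fun h => h.2, fun h => ⟨⟨c, hc, h⟩, h⟩⟩
  · intro v hv
    simp only [mem_filter, mem_univ, true_and, Set.mem_iUnion, ConnectedComponent.mem_supp_iff] at hv
    obtain ⟨c, hc, rfl⟩ := hv
    exact hc

lemma popSet_univ_eq_sum_supp (H : SimpleGraph V) [Fintype H.ConnectedComponent] :
    popSet pop Set.univ = ∑ c : H.ConnectedComponent, popSet pop c.supp := by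
  rw [← popSet_biUnion_supp]
  congr
  ext v
  simp

lemma popSet_supp_eq_sum_supp_of_le {H G : SimpleGraph V} (h : H ≤ G) (g : G.ConnectedComponent) :
    popSet pop g.supp =
      ∑ c ∈ univ.filter (fun c : H.ConnectedComponent => c.map (Hom.ofLE h) = g),
        popSet pop c.supp := by
  rw [← popSet_biUnion_supp]
  congr
  ext v
  simp [ConnectedComponent.mem_supp_iff, ConnectedComponent.map_mk]

end popSet

namespace SimpleGraph

variable {V : Type*} {G : SimpleGraph V}

lemma Reachable.deleteEdges_of_not_reachable_mem {e : Sym2 V} {u v : V} (h : G.Reachable u v)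
    (hu : ∀ x ∈ e, ¬(G.deleteEdges {e}).Reachable u x) : (G.deleteEdges {e}).Reachable u v := by
  obtain ⟨p⟩ := h
  induction p with
  | nil => rfl
  | @cons u w v hadj p ih =>
    have hD : (G.deleteEdges {e}).Adj u w := by
      refine (deleteEdges_adj ..).mpr ⟨hadj, ?_⟩
      rintro rfl
      exact hu u (Sym2.mem_mk_left u w) Reachable.rfl
    exact hD.reachable.trans (ih fun x hx hr => hu x hx (hD.reachable.trans hr))

lemma ConnectedComponent.supp_deleteEdges_of_not_reachable_mem {e : Sym2 V} {u : V}
    (hu : ∀ x ∈ e, ¬(G.deleteEdges {e}).Reachable u x) :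
    ((G.deleteEdges {e}).connectedComponentMk u).supp = (G.connectedComponentMk u).supp := by
  ext w
  simp only [ConnectedComponent.mem_supp_iff, ConnectedComponent.eq]
  exact ⟨fun h => h.mono (deleteEdges_le _),
    fun h => (h.symm.deleteEdges_of_not_reachable_mem hu).symm⟩

lemma Preconnected.supp_eq_univ (hG : G.Preconnected) (c : G.ConnectedComponent) :
    c.supp = Set.univ := by
  have := hG.subsingleton_connectedComponent
  exact Set.eq_univ_of_forall fun v => Subsingleton.elim _ _

lemma card_connectedComponent_lt_deleteEdges [Finite V] {e : Sym2 V} (he : e ∈ G.edgeSet)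
    (hb : G.IsBridge e) :
    Nat.card G.ConnectedComponent < Nat.card (G.deleteEdges {e}).ConnectedComponent := by
  induction e using Sym2.ind with
  | _ a b =>
  have := Fintype.ofFinite V
  simp only [Nat.card_eq_fintype_card]
  refine Fintype.card_lt_of_surjective_not_injective _
    (ConnectedComponent.surjective_map_ofLE (deleteEdges_le {s(a, b)})) fun hinj => hb ?_
  have hab : G.connectedComponentMk a = G.connectedComponentMk b :=
    ConnectedComponent.eq.mpr (G.mem_edgeSet.mp he).reachable
  exact ConnectedComponent.eq.mp (hinj (by simpa [ConnectedComponent.map_mk] using hab))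

lemma IsAcyclic.card_connectedComponent_add_card_le [Finite V] (hG : G.IsAcyclic)
    (S : Finset (Sym2 V)) (hS : ↑S ⊆ G.edgeSet) :
    Nat.card G.ConnectedComponent + #S ≤ Nat.card (G.deleteEdges ↑S).ConnectedComponent := by
  induction S using Finset.induction_on with
  | empty => simp
  | @insert e S he ih =>
    rw [coe_insert, Set.insert_subset_iff] at hS
    have heS : e ∈ (G.deleteEdges ↑S).edgeSet := by
      rw [edgeSet_deleteEdges]
      exact ⟨hS.1, he⟩
    have hbridge := isAcyclic_iff_forall_isBridge.mp (hG.anti (deleteEdges_le _)) heS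
    have hlt := card_connectedComponent_lt_deleteEdges heS hbridge
    rw [deleteEdges_deleteEdges, Set.union_singleton] at hlt
    rw [card_insert_of_notMem he, coe_insert]
    have := ih hS.2
    omega

section divisibility

variable [Fintype V] {pop : V → ℕ} {I : ℕ}

lemma dvd_popSet_supp_deleteEdges_mk_of_mem {T H : SimpleGraph V} (hHT : H ≤ T) {e : Sym2 V}
    (hb : T.IsBridge e) (hcut : ∀ g : (T.deleteEdges {e}).ConnectedComponent, I ∣ popSet pop g.supp)
    (hH : ∀ c : H.ConnectedComponent, I ∣ popSet pop c.supp) {x : V} (hx : x ∈ e) :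
    I ∣ popSet pop ((H.deleteEdges {e}).connectedComponentMk x).supp := by
  have hle : H.deleteEdges {e} ≤ T.deleteEdges {e} := deleteEdges_mono hHT
  have hsum := popSet_supp_eq_sum_supp_of_le pop hle ((T.deleteEdges {e}).connectedComponentMk x)
  rw [← add_sum_erase _ _ (a := (H.deleteEdges {e}).connectedComponentMk x) (by simp)] at hsum
  refine (Nat.dvd_add_left (dvd_sum fun c hc => ?_)).mp (hsum ▸ hcut _)
  induction c using ConnectedComponent.ind with
  | _ w =>
  simp only [mem_erase, mem_filter, mem_univ, true_and, ConnectedComponent.map_mk,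
    Hom.ofLE_apply, ConnectedComponent.eq] at hc
  obtain ⟨hne, hwx⟩ := hc
  have hw : ∀ z ∈ e, ¬(H.deleteEdges {e}).Reachable w z := by
    intro z hz hwz
    by_cases hzx : z = x
    · exact hne (ConnectedComponent.eq.mpr (hzx ▸ hwz))
    · obtain rfl := (Sym2.mem_and_mem_iff (Ne.symm hzx)).mp ⟨hx, hz⟩
      exact hb (hwx.symm.trans (hwz.mono hle))
  rw [ConnectedComponent.supp_deleteEdges_of_not_reachable_mem hw]
  exact hH _

lemma dvd_popSet_supp_deleteEdges {T H : SimpleGraph V} (hHT : H ≤ T) {e : Sym2 V}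
    (hb : T.IsBridge e) (hcut : ∀ g : (T.deleteEdges {e}).ConnectedComponent, I ∣ popSet pop g.supp)
    (hH : ∀ c : H.ConnectedComponent, I ∣ popSet pop c.supp)
    (c : (H.deleteEdges {e}).ConnectedComponent) : I ∣ popSet pop c.supp := by
  induction c using ConnectedComponent.ind with
  | _ u =>
  by_cases hu : ∃ x ∈ e, (H.deleteEdges {e}).Reachable u x
  · obtain ⟨x, hx, hux⟩ := hu
    rw [ConnectedComponent.eq.mpr hux]
    exact dvd_popSet_supp_deleteEdges_mk_of_mem hHT hb hcut hH hx
  · push Not at hu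
    rw [ConnectedComponent.supp_deleteEdges_of_not_reachable_mem hu]
    exact hH _

lemma IsTree.dvd_popSet_supp_deleteEdges_validCut {T : SimpleGraph V} (hT : T.IsTree)
    (hI : I ∣ popSet pop Set.univ) (S : Finset (Sym2 V)) (hS : ∀ e ∈ S, ValidCut T pop I e) :
    ∀ c : (T.deleteEdges ↑S).ConnectedComponent, I ∣ popSet pop c.supp := by
  induction S using Finset.induction_on with
  | empty =>
    rw [coe_empty, deleteEdges_empty]
    intro c
    rwa [hT.connected.preconnected.supp_eq_univ c]
  | @insert e S _ ih =>
    obtain ⟨he, hcut⟩ := hS e (mem_insert_self e S)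
    rw [coe_insert, ← Set.union_singleton, ← deleteEdges_deleteEdges]
    exact dvd_popSet_supp_deleteEdges (deleteEdges_le _)
      (isAcyclic_iff_forall_isBridge.mp hT.isAcyclic he)
      (fun g => (hcut g).elim fun m hm => Dvd.intro_left m hm.2.symm)
      (ih fun e' he' => hS e' (mem_insert_of_mem he'))

end divisibility

end SimpleGraph

theorem removing_all_validCuts_general {V : Type*} [Fintype V]
    (T : SimpleGraph V) (pop : V → ℕ)
    (hpos : ∀ v, 0 < pop v) (hTree : T.IsTree)
    (k I : ℕ) (hI : popSet pop Set.univ = k * I)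
    (hcount : ((Finset.univ : Finset (Sym2 V)).filter
        (fun e => ValidCut T pop I e)).card = k - 1) :
    Fintype.card ((T.deleteEdges {e | ValidCut T pop I e}).ConnectedComponent) = k ∧
      ∀ c : (T.deleteEdges {e | ValidCut T pop I e}).ConnectedComponent,
        popSet pop c.supp = I := by
  set S := (Finset.univ : Finset (Sym2 V)).filter (fun e => ValidCut T pop I e)
  have hcuts : {e | ValidCut T pop I e} = ↑S := by ext; simp [S]
  rw [← Nat.card_eq_fintype_card, hcuts]
  have : Nonempty V := hTree.connected.nonempty
  have hkI : 0 < k * I := hI ▸ popSet_pos pop Set.univ_nonempty hpos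
  have hdvd := hTree.dvd_popSet_supp_deleteEdges_validCut (Dvd.intro_left k hI.symm) S
    fun e he => (mem_filter.mp he).2
  have hcard := hTree.isAcyclic.card_connectedComponent_add_card_le S
    fun e he => (mem_filter.mp he).2.1
  rw [hcount, Nat.card_eq_one_iff_unique.mpr
    ⟨hTree.connected.preconnected.subsingleton_connectedComponent, inferInstance⟩] at hcard
  refine card_eq_and_forall_eq_of_sum_eq_mul (Nat.pos_of_mul_pos_left hkI)
    (fun c => Nat.le_of_dvd (popSet_pos pop c.nonempty_supp hpos) (hdvd c))
    ((popSet_univ_eq_sum_supp pop _).symm.trans hI) ?_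
  have := Nat.pos_of_mul_pos_right hkI
  omega

/-- If a spanning tree `T` of a connected graph `G` has exactly `k-1` valid cut edges,
then removing all of them yields exactly `k` connected components, each of population
exactly `I`. -/
theorem removing_all_validCuts {V : Type*} [Fintype V]
    (G T : SimpleGraph V) (pop : V → ℕ)
    (hpos : ∀ v, 0 < pop v) (hG : G.Connected) (hT : T ≤ G) (hTree : T.IsTree)
    (k I : ℕ) (hk : 1 ≤ k) (hI : popSet pop Set.univ = k * I)
    (hcount : ((Finset.univ : Finset (Sym2 V)).filter
        (fun e => ValidCut T pop I e)).card = k - 1) :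
    Fintype.card ((T.deleteEdges {e | ValidCut T pop I e}).ConnectedComponent) = k ∧
      ∀ c : (T.deleteEdges {e | ValidCut T pop I e}).ConnectedComponent,
        popSet pop c.supp = I :=
  removing_all_validCuts_general T pop hpos hTree k I hI hcount
end

section
/- Let T be a finite tree with positive vertex populations summing to k·I (I an integer ≥ 1, k ≥ 1). Then the valid cut edges of T are exactly the edges contained in every partition of T into population-I components obtained by edge-deletion, whenever such a partition exists: i.e., if T admits a set F of k−1 edges whose removal leaves k components of population exactly I, then F equals the set of all valid cut edges of T, and this F is unique. -/
/-!
Let `G` be `T` with the edges of `F` deleted, so every component of `G` has population `I`.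
Deleting a single edge `e ∈ F` from `T` leaves components that are unions of components of `G`,
hence have population a positive multiple of `I`. If instead `e = s(a, b) ∉ F`, then `a` and `b`
lie in one component `C` of `G`, and since `e` is a bridge of the tree, the component `D` of `a`
in `T - e` meets `C` in a nonempty proper part while containing or avoiding every other component
of `G`; so the population of `D` is not a multiple of `I`. Hence `F` is the set of valid cut edges,
which determines it.
-/

open scoped Classical

namespace SimpleGraph

variable {V : Type*}

theorem ConnectedComponent.subset_supp_or_disjoint {G : SimpleGraph V}
    (c : G.ConnectedComponent) {s : Set V} (hs : ∀ u ∈ s, ∀ v ∈ s, G.Reachable u v) :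
    s ⊆ c.supp ∨ Disjoint c.supp s := by
  by_cases h : ∃ u ∈ s, u ∈ c.supp
  · obtain ⟨u, hus, huc⟩ := h
    exact Or.inl fun v hv => (c.mem_supp_iff v).mpr <|
      (ConnectedComponent.sound (hs u hus v hv)).symm.trans huc
  · push Not at h
    exact Or.inr <| Set.disjoint_right.mpr h

theorem Reachable.deleteEdges_of_not_reachable {G : SimpleGraph V} {u v a b : V}
    (huv : G.Reachable u v) (hua : ¬ G.Reachable u a) :
    (G.deleteEdges {s(a, b)}).Reachable u v := by
  obtain ⟨p⟩ := huv
  exact ⟨p.toDeleteEdge _ fun he => hua ⟨p.takeUntil a (p.fst_mem_support_of_mem_edges he)⟩⟩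

end SimpleGraph

section Population

open SimpleGraph

variable {V : Type*} [Fintype V] {pop : V → ℕ}

theorem popSet_pos_of_mem {s : Set V} {v : V} (hv : 0 < pop v) (hvs : v ∈ s) :
    0 < popSet pop s :=
  hv.trans_le <| by
    simpa [popSet, hvs] using Finset.single_le_sum (f := fun w => if w ∈ s then pop w else 0)
      (fun _ _ => Nat.zero_le _) (Finset.mem_univ v)

theorem popSet_lt_popSet {s t : Set V} {v : V} (hst : s ⊆ t) (hv : 0 < pop v) (hvt : v ∈ t)
    (hvs : v ∉ s) : popSet pop s < popSet pop t := by
  simp only [popSet, ← Finset.sum_filter]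
  refine Finset.sum_lt_sum_of_subset (i := v) ?_ (by simpa using hvt) (by simpa using hvs) hv
    fun _ _ _ => Nat.zero_le _
  exact Finset.monotone_filter_right _ fun w _ => @hst w

theorem popSet_eq_sum_inter_supp (G : SimpleGraph V) [Fintype G.ConnectedComponent] (s : Set V) :
    popSet pop s = ∑ c : G.ConnectedComponent, popSet pop (s ∩ c.supp) := by
  rw [popSet, ← Finset.sum_fiberwise Finset.univ G.connectedComponentMk]
  refine Finset.sum_congr rfl fun c _ => ?_
  rw [popSet, Finset.sum_filter]
  refine Finset.sum_congr rfl fun v _ => ?_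
  by_cases hv : G.connectedComponentMk v = c <;> simp [hv]

theorem dvd_popSet_inter {I : ℕ} {s t : Set V} (hts : t ⊆ s ∨ Disjoint s t)
    (hI : I ∣ popSet pop t) : I ∣ popSet pop (s ∩ t) := by
  rcases hts with hts | hst
  · rwa [Set.inter_eq_right.mpr hts]
  · simp [hst.inter_eq, popSet]

section Partition

variable {T : SimpleGraph V} {I : ℕ} {F : Set (Sym2 V)}

theorem validCut_of_mem (hF : F ⊆ T.edgeSet) (hpos : ∀ v, 0 < pop v)
    (hcomp : ∀ c : (T.deleteEdges F).ConnectedComponent, popSet pop c.supp = I)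
    {e : Sym2 V} (he : e ∈ F) : ValidCut T pop I e := by
  refine ⟨hF he, fun d => ?_⟩
  have hle : T.deleteEdges F ≤ T.deleteEdges {e} :=
    deleteEdges_anti (Set.singleton_subset_iff.mpr he)
  have hdvd : I ∣ popSet pop d.supp := by
    rw [popSet_eq_sum_inter_supp (T.deleteEdges F)]
    refine Finset.dvd_sum fun c _ => dvd_popSet_inter ?_ (hcomp c).symm.dvd
    refine d.subset_supp_or_disjoint fun u hu v hv => ?_
    exact (ConnectedComponent.exact (hu.trans hv.symm)).mono hle
  obtain ⟨m, hm⟩ := hdvd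
  obtain ⟨v, hv⟩ := d.nonempty_supp
  refine ⟨m, Nat.pos_of_ne_zero ?_, hm.trans (mul_comm I m)⟩
  rintro rfl
  exact (popSet_pos_of_mem (hpos v) hv).ne' (by simpa using hm)

theorem mem_of_validCut (hT : T.IsAcyclic) (hpos : ∀ v, 0 < pop v)
    (hcomp : ∀ c : (T.deleteEdges F).ConnectedComponent, popSet pop c.supp = I)
    {e : Sym2 V} (he : ValidCut T pop I e) : e ∈ F := by
  induction e using Sym2.ind with | _ a b =>
  obtain ⟨hab, hvalid⟩ := he
  by_contra heF
  set G := T.deleteEdges F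
  set D := (T.deleteEdges {s(a, b)}).connectedComponentMk a
  set c₀ := G.connectedComponentMk a
  have hbD : b ∉ D.supp := fun hb =>
    isAcyclic_iff_forall_adj_isBridge.mp hT hab (ConnectedComponent.exact hb).symm
  have hbc₀ : b ∈ c₀.supp :=
    ConnectedComponent.sound ((deleteEdges_adj ..).mpr ⟨hab, heF⟩ : G.Adj a b).symm.reachable
  have hsplit : ∀ c ≠ c₀, I ∣ popSet pop (D.supp ∩ c.supp) := by
    intro c hc
    refine dvd_popSet_inter (D.subset_supp_or_disjoint fun u hu v hv => ?_) (hcomp c).symm.dvd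
    have hua : ¬ G.Reachable u a := fun h => hc (hu.symm.trans (ConnectedComponent.sound h))
    exact ((ConnectedComponent.exact (hu.trans hv.symm)).deleteEdges_of_not_reachable hua).mono
      (deleteEdges_mono (deleteEdges_le F))
  have hdvd : I ∣ popSet pop (D.supp ∩ c₀.supp) := by
    obtain ⟨m, -, hm⟩ := hvalid D
    have hD : I ∣ popSet pop D.supp := ⟨m, hm.trans (mul_comm m I)⟩
    rw [popSet_eq_sum_inter_supp G, ← Finset.add_sum_erase _ _ (Finset.mem_univ c₀)] at hD
    exact (Nat.dvd_add_left (Finset.dvd_sum fun c hc => hsplit c (Finset.ne_of_mem_erase hc))).mp hD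
  have hlt : popSet pop (D.supp ∩ c₀.supp) < I :=
    hcomp c₀ ▸ popSet_lt_popSet Set.inter_subset_right (hpos b) hbc₀ fun h => hbD h.1
  have hpos₀ : 0 < popSet pop (D.supp ∩ c₀.supp) := popSet_pos_of_mem (hpos a) ⟨rfl, rfl⟩
  exact hpos₀.ne' (Nat.eq_zero_of_dvd_of_lt hdvd hlt)

theorem mem_iff_validCut (hT : T.IsAcyclic) (hF : F ⊆ T.edgeSet) (hpos : ∀ v, 0 < pop v)
    (hcomp : ∀ c : (T.deleteEdges F).ConnectedComponent, popSet pop c.supp = I) (e : Sym2 V) :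
    e ∈ F ↔ ValidCut T pop I e :=
  ⟨validCut_of_mem hF hpos hcomp, mem_of_validCut hT hpos hcomp⟩

end Partition

end Population

theorem cut_set_unique_general {V : Type*} [Fintype V]
    (T : SimpleGraph V) (hTree : T.IsTree)
    (pop : V → ℕ) (hpos : ∀ v, 0 < pop v)
    (k I : ℕ)
    (F : Finset (Sym2 V)) (hF : ↑F ⊆ T.edgeSet)
    (hcomp : ∀ c : (T.deleteEdges ↑F).ConnectedComponent, popSet pop c.supp = I) :
    (∀ e : Sym2 V, e ∈ F ↔ ValidCut T pop I e) ∧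
    ∀ F' : Finset (Sym2 V), ↑F' ⊆ T.edgeSet → F'.card = k - 1 →
      (∀ c : (T.deleteEdges ↑F').ConnectedComponent, popSet pop c.supp = I) →
      F' = F := by
  refine ⟨mem_iff_validCut hTree.isAcyclic hF hpos hcomp, fun F' hF' _ hcomp' => ?_⟩
  ext e
  exact (mem_iff_validCut hTree.isAcyclic hF' hpos hcomp' e).trans
    (mem_iff_validCut hTree.isAcyclic hF hpos hcomp e).symm

/-- If a tree `T` with total population `k·I` admits a set `F` of `k-1` edges whose
removal leaves `k` components of population exactly `I`, then `F` is exactly the set of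
all valid cut edges of `T`, and `F` is the unique such set. -/
theorem cut_set_unique {V : Type*} [Fintype V]
    (T : SimpleGraph V) (hTree : T.IsTree)
    (pop : V → ℕ) (hpos : ∀ v, 0 < pop v)
    (k I : ℕ) (hk : 1 ≤ k) (hIpos : 1 ≤ I) (hI : popSet pop Set.univ = k * I)
    (F : Finset (Sym2 V)) (hF : ↑F ⊆ T.edgeSet) (hcard : F.card = k - 1)
    (hcomp : ∀ c : (T.deleteEdges ↑F).ConnectedComponent, popSet pop c.supp = I) :
    (∀ e : Sym2 V, e ∈ F ↔ ValidCut T pop I e) ∧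
    ∀ F' : Finset (Sym2 V), ↑F' ⊆ T.edgeSet → F'.card = k - 1 →
      (∀ c : (T.deleteEdges ↑F').ConnectedComponent, popSet pop c.supp = I) →
      F' = F :=
  cut_set_unique_general T hTree pop hpos k I F hF hcomp
end
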